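/- Let d ≥ 3 be an integer. There is a constant c > 0, depending only on d, such that for every integer r ≥ 1 and every integer n ≥ r + 1: Σ_{0 < i_1 < ⋯ < i_r < n} i_1^{−d/2} (i_2 − i_1)^{−d/2} ⋯ (i_r − i_{r−1})^{−d/2} (n − i_r)^{−d/2} ≤ c^r · n^{−d/2}. (Lemma C.1.) -/

import Mathlib

/-!
Write `w k = k ^ (-d/2)` and `S_r(n)` for the sum. Splitting off the largest index gives
`S_{r+1}(n) = ∑_{0<m<n} S_r(m) w(n - m)`, and `S_0 = w ⋆ w` is a discrete convolution, so by
induction everything reduces to `(w ⋆ w)(n) ≤ C w(n)`. For `d/2 > 1` this holds with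
`C = 2^{d/2+1} ∑_k w(k)`: in each term `w(m) w(n - m)` one of `m`, `n - m` is at least `n/2`, so the
term is at most `w(n/2) (w(m) + w(n - m))`.
-/

open scoped BigOperators

noncomputable section

/-- The summand `i_1^{−d/2} (i_2−i_1)^{−d/2} ⋯ (i_{r+1}−i_r)^{−d/2}` attached to a tuple
`i : Fin (r+1) → ℕ` (with the convention `i_0 := 0`). -/
def gapProd (d : ℕ) (r : ℕ) (i : Fin (r + 1) → ℕ) : ℝ :=
  ∏ j : Fin (r + 1),
    (((i j - if (j : ℕ) = 0 then 0
        else i ⟨(j : ℕ) - 1, lt_of_le_of_lt (Nat.sub_le _ _) j.isLt⟩ : ℕ) : ℝ)) ^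
      (-(d : ℝ) / 2)

open Finset

theorem rpow_neg_mul_rpow_neg_le {a b s : ℝ} (ha : 0 < a) (hb : 0 < b) (hs : 0 ≤ s) :
    a ^ (-s) * b ^ (-s) ≤ ((a + b) / 2) ^ (-s) * (a ^ (-s) + b ^ (-s)) := by
  wlog hab : a ≤ b generalizing a b
  · simpa only [mul_comm, add_comm] using this hb ha (le_of_not_ge hab)
  have hb' : b ^ (-s) ≤ ((a + b) / 2) ^ (-s) :=
    Real.rpow_le_rpow_of_nonpos (by positivity) (by linarith) (by linarith)
  have ha0 : 0 ≤ a ^ (-s) := by positivity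
  have hb0 : 0 ≤ b ^ (-s) := by positivity
  nlinarith

theorem sum_Ioo_rpow_neg_reflect (n : ℕ) (s : ℝ) :
    ∑ m ∈ Ioo 0 n, ((n - m : ℕ) : ℝ) ^ (-s) = ∑ m ∈ Ioo 0 n, (m : ℝ) ^ (-s) := by
  refine sum_nbij' (n - ·) (n - ·) ?_ ?_ ?_ ?_ ?_ <;> intro m hm <;>
    simp only [mem_Ioo] at hm ⊢ <;> omega

theorem sum_Ioo_rpow_neg_mul_rpow_neg_le {s : ℝ} (hs : 1 < s) (n : ℕ) :
    ∑ m ∈ Ioo 0 n, (m : ℝ) ^ (-s) * ((n - m : ℕ) : ℝ) ^ (-s) ≤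
      2 ^ (s + 1) * (∑' k : ℕ, (k : ℝ) ^ (-s)) * (n : ℝ) ^ (-s) := by
  have half_rpow : ((n : ℝ) / 2) ^ (-s) = 2 ^ s * (n : ℝ) ^ (-s) := by
    rw [Real.div_rpow (Nat.cast_nonneg n) zero_le_two, Real.rpow_neg zero_le_two, div_inv_eq_mul,
      mul_comm]
  calc ∑ m ∈ Ioo 0 n, (m : ℝ) ^ (-s) * ((n - m : ℕ) : ℝ) ^ (-s)
      ≤ ∑ m ∈ Ioo 0 n, 2 ^ s * (n : ℝ) ^ (-s) * ((m : ℝ) ^ (-s) + ((n - m : ℕ) : ℝ) ^ (-s)) := by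
        refine sum_le_sum fun m hm => ?_
        rw [mem_Ioo] at hm
        have hsum : (m : ℝ) + ((n - m : ℕ) : ℝ) = n := by push_cast [hm.2.le]; ring
        have := rpow_neg_mul_rpow_neg_le (a := m) (b := (n - m : ℕ)) (s := s)
          (by exact_mod_cast hm.1) (by exact_mod_cast Nat.sub_pos_of_lt hm.2) (by linarith)
        rwa [hsum, half_rpow] at this
    _ = 2 ^ s * (n : ℝ) ^ (-s) * (2 * ∑ m ∈ Ioo 0 n, (m : ℝ) ^ (-s)) := by
        rw [← mul_sum, sum_add_distrib, sum_Ioo_rpow_neg_reflect, two_mul]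
    _ ≤ 2 ^ s * (n : ℝ) ^ (-s) * (2 * ∑' k : ℕ, (k : ℝ) ^ (-s)) := by
        gcongr
        exact (Real.summable_nat_rpow.2 (by linarith)).sum_le_tsum _ fun k _ => by positivity
    _ = 2 ^ (s + 1) * (∑' k : ℕ, (k : ℝ) ^ (-s)) * (n : ℝ) ^ (-s) := by
        rw [Real.rpow_add_one two_ne_zero]
        ring

theorem strictMono_snoc_iff {α : Type*} [Preorder α] {r : ℕ} {i : Fin (r + 1) → α} {m : α} :
    StrictMono (Fin.snoc i m : Fin (r + 2) → α) ↔ StrictMono i ∧ i (Fin.last r) < m := by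
  simp only [Fin.strictMono_iff_lt_succ (f := (Fin.snoc i m : Fin (r + 2) → α)),
    Fin.forall_fin_succ', Fin.succ_castSucc, Fin.snoc_castSucc, Fin.succ_last, Fin.snoc_last,
    ← Fin.strictMono_iff_lt_succ]

open Classical in
def incTuples (r n : ℕ) : Finset (Fin (r + 1) → ℕ) :=
  {i ∈ Fintype.piFinset fun _ => Ioo 0 n | StrictMono i}

theorem mem_incTuples {r n : ℕ} {i : Fin (r + 1) → ℕ} :
    i ∈ incTuples r n ↔ StrictMono i ∧ ∀ j, 0 < i j ∧ i j < n := by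
  simp only [incTuples, mem_filter, Fintype.mem_piFinset, mem_Ioo]
  tauto

theorem snoc_mem_incTuples_iff {r n m : ℕ} {i : Fin (r + 1) → ℕ} :
    (Fin.snoc i m : Fin (r + 2) → ℕ) ∈ incTuples (r + 1) n ↔
      m ∈ Ioo 0 n ∧ i ∈ incTuples r m := by
  simp only [mem_incTuples, strictMono_snoc_iff, mem_Ioo]
  rw [Fin.forall_fin_succ' (n := r + 1)]
  simp only [Fin.snoc_castSucc, Fin.snoc_last]
  constructor
  · rintro ⟨⟨hmono, hlast⟩, hi, hm⟩
    exact ⟨hm, hmono, fun j => ⟨(hi j).1, (hmono.monotone (Fin.le_last j)).trans_lt hlast⟩⟩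
  · rintro ⟨hm, hmono, hi⟩
    exact ⟨⟨hmono, (hi _).2⟩, fun j => ⟨(hi j).1, (hi j).2.trans hm.2⟩, hm⟩

def gapSum (d r n : ℕ) : ℝ :=
  ∑ i ∈ incTuples r n, gapProd d r i * ((n - i (Fin.last r) : ℕ) : ℝ) ^ (-(d : ℝ) / 2)

theorem tsum_eq_gapSum (d r n : ℕ) :
    ∑' i : {i : Fin (r + 1) → ℕ // StrictMono i ∧ ∀ j, 0 < i j ∧ i j < n},
        gapProd d r i.1 * ((n - i.1 (Fin.last r) : ℕ) : ℝ) ^ (-(d : ℝ) / 2) = gapSum d r n := by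
  rw [gapSum, ← Finset.tsum_subtype]
  exact (Equiv.subtypeEquivRight fun _ => mem_incTuples.symm).tsum_eq
    fun i : {i // i ∈ incTuples r n} =>
      gapProd d r i.1 * ((n - i.1 (Fin.last r) : ℕ) : ℝ) ^ (-(d : ℝ) / 2)

theorem gapSum_zero (d n : ℕ) :
    gapSum d 0 n =
      ∑ m ∈ Ioo 0 n, (m : ℝ) ^ (-(d : ℝ) / 2) * ((n - m : ℕ) : ℝ) ^ (-(d : ℝ) / 2) := by
  refine sum_nbij' (fun i => i 0) (fun m _ => m) ?_ ?_ ?_ ?_ ?_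
  · intro i hi
    exact mem_Ioo.2 ((mem_incTuples.1 hi).2 0)
  · intro m hm
    exact mem_incTuples.2 ⟨Fin.strictMono_iff_lt_succ.2 fun j => j.elim0, fun _ => mem_Ioo.1 hm⟩
  · intro i _
    funext j
    rw [Subsingleton.elim (α := Fin 1) j 0]
  · intro m _
    rfl
  · intro i _
    simp [gapProd]

theorem gapProd_succ (d r : ℕ) (i : Fin (r + 2) → ℕ) :
    gapProd d (r + 1) i =
      gapProd d r (Fin.init i) *
        ((i (Fin.last (r + 1)) - Fin.init i (Fin.last r) : ℕ) : ℝ) ^ (-(d : ℝ) / 2) := by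
  rw [gapProd, Fin.prod_univ_castSucc]
  rfl

theorem gapSum_succ (d r n : ℕ) :
    gapSum d (r + 1) n =
      ∑ m ∈ Ioo 0 n, gapSum d r m * ((n - m : ℕ) : ℝ) ^ (-(d : ℝ) / 2) := by
  simp_rw [gapSum, sum_mul]
  rw [sum_sigma']
  refine sum_nbij' (fun i => ⟨i (Fin.last _), Fin.init i⟩) (fun x => Fin.snoc x.2 x.1)
    ?_ ?_ ?_ ?_ ?_
  · intro i hi
    rw [← Fin.snoc_init_self i, snoc_mem_incTuples_iff] at hi
    exact mem_sigma.2 hi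
  · rintro ⟨m, i⟩ hi
    exact snoc_mem_incTuples_iff.2 (mem_sigma.1 hi)
  · intro i _
    exact Fin.snoc_init_self i
  · rintro ⟨m, i⟩ _
    simp only [Fin.snoc_last, Fin.init_snoc]
  · intro i _
    rw [gapProd_succ]

theorem gapSum_le_of_convolution_le {d : ℕ} {C : ℝ} (hC : 0 ≤ C)
    (hconv : ∀ n : ℕ, ∑ m ∈ Ioo 0 n, (m : ℝ) ^ (-(d : ℝ) / 2) * ((n - m : ℕ) : ℝ) ^ (-(d : ℝ) / 2)
      ≤ C * (n : ℝ) ^ (-(d : ℝ) / 2)) (r n : ℕ) :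
    gapSum d r n ≤ C ^ (r + 1) * (n : ℝ) ^ (-(d : ℝ) / 2) := by
  induction r generalizing n with
  | zero => simpa [gapSum_zero] using hconv n
  | succ r ih =>
    calc gapSum d (r + 1) n
        ≤ ∑ m ∈ Ioo 0 n, C ^ (r + 1) *
            ((m : ℝ) ^ (-(d : ℝ) / 2) * ((n - m : ℕ) : ℝ) ^ (-(d : ℝ) / 2)) := by
          rw [gapSum_succ]
          refine sum_le_sum fun m _ => ?_
          rw [← mul_assoc]
          exact mul_le_mul_of_nonneg_right (ih m) (by positivity)
      _ ≤ C ^ (r + 1) * (C * (n : ℝ) ^ (-(d : ℝ) / 2)) := by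
          rw [← mul_sum]
          exact mul_le_mul_of_nonneg_left (hconv n) (by positivity)
      _ = C ^ (r + 1 + 1) * (n : ℝ) ^ (-(d : ℝ) / 2) := by ring

/-- Lemma C.1: there is `c > 0` (depending only on `d`) such that for all `r ≥ 1` and
`n ≥ r + 1`,
`Σ_{0 < i_1 < ⋯ < i_r < n} i_1^{−d/2} (i_2−i_1)^{−d/2} ⋯ (n−i_r)^{−d/2} ≤ c^r n^{−d/2}`
(stated with `r + 1` in place of `r`). -/
theorem stmt14 (d : ℕ) (hd : 3 ≤ d) :
    ∃ c : ℝ, 0 < c ∧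
      ∀ r n : ℕ, r + 2 ≤ n →
        (∑' i : {i : Fin (r + 1) → ℕ // StrictMono i ∧ ∀ j, 0 < i j ∧ i j < n},
            gapProd d r i.1 * ((n - i.1 (Fin.last r) : ℕ) : ℝ) ^ (-(d : ℝ) / 2)) ≤
          c ^ (r + 1) * (n : ℝ) ^ (-(d : ℝ) / 2) := by
  have hs : 1 < (d : ℝ) / 2 := by
    have : (3 : ℝ) ≤ d := by exact_mod_cast hd
    linarith
  have hZ : 0 < ∑' k : ℕ, (k : ℝ) ^ (-((d : ℝ) / 2)) :=
    (Real.summable_nat_rpow.2 (by linarith)).tsum_pos (fun _ => by positivity) 1 (by simp)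
  have hconv := sum_Ioo_rpow_neg_mul_rpow_neg_le hs
  rw [← neg_div] at hZ hconv
  refine ⟨2 ^ ((d : ℝ) / 2 + 1) * ∑' k : ℕ, (k : ℝ) ^ (-(d : ℝ) / 2), by positivity, fun r n _ => ?_⟩
  rw [tsum_eq_gapSum]
  exact gapSum_le_of_convolution_le (by positivity) hconv r n
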